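/- Let 0 < γ ≤ 1 and p ≥ 1. For probability measures F₁, F₂ on [0,∞) with finite p-th moments, let d_{γ,p}(F₁,F₂) := W_p(s_#F₁, s_#F₂) where s(x) = x^γ. Then d_{γ,p}(F₁,F₂) ≤ W_p(F₁,F₂)^γ. -/

import Mathlib

open MeasureTheory Real

/-- Wasserstein-`p` distance on `ℝ`, defined as the infimum over couplings of the
`p`-th root of the transport cost. -/
noncomputable def Wp (p : ℝ) (μ ν : Measure ℝ) : ℝ :=
  sInf {c : ℝ | ∃ P : Measure (ℝ × ℝ), IsProbabilityMeasure P ∧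
    P.map Prod.fst = μ ∧ P.map Prod.snd = ν ∧
    c = (∫ z, |z.1 - z.2| ^ p ∂P) ^ (1 / p)}

/-!
The map `s x = x ^ γ` is `γ`-Hölder on `[0, ∞)`. Pushing a coupling `P` of `F₁, F₂` forward by
`s × s` gives a coupling of `s_# F₁, s_# F₂` of cost at most `E_P |X - Y| ^ (γ p)`, which by Jensen
for the concave `t ↦ t ^ γ` is at most `(E_P |X - Y| ^ p) ^ γ`. Taking `p`-th roots and the infimum
over `P` gives the claim, since `t ↦ t ^ γ` is monotone and continuous on `[0, ∞)`.
-/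

theorem Real.abs_rpow_sub_rpow_le {x y γ : ℝ} (hx : 0 ≤ x) (hy : 0 ≤ y) (hγ₀ : 0 ≤ γ)
    (hγ₁ : γ ≤ 1) : |x ^ γ - y ^ γ| ≤ |x - y| ^ γ := by
  wlog hyx : y ≤ x generalizing x y
  · rw [abs_sub_comm, abs_sub_comm x y]
    exact this hy hx (le_of_not_ge hyx)
  have hxy : 0 ≤ x - y := sub_nonneg.2 hyx
  rw [abs_of_nonneg (sub_nonneg.2 (rpow_le_rpow hy hyx hγ₀)), abs_of_nonneg hxy]
  have := rpow_add_le_add_rpow hxy hy hγ₀ hγ₁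
  rw [sub_add_cancel] at this
  linarith

section Integrals

variable {α : Type*} [MeasurableSpace α] {μ : Measure α} {f : α → ℝ} {p γ : ℝ}

theorem integrable_abs_rpow_iff_memLp (hp : 0 < p) (hf : AEStronglyMeasurable f μ) :
    Integrable (fun x => |f x| ^ p) μ ↔ MemLp f (ENNReal.ofReal p) μ := by
  simpa [hp.le, hp] using
    integrable_norm_rpow_iff hf (p := ENNReal.ofReal p) (by simp [hp]) (by simp)

theorem MeasureTheory.Integrable.rpow_of_le_one [IsFiniteMeasure μ] (hfi : Integrable f μ)
    (hf : 0 ≤ᵐ[μ] f) (hγ₀ : 0 ≤ γ) (hγ₁ : γ ≤ 1) : Integrable (fun x => f x ^ γ) μ := by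
  refine (integrable_norm_rpow_of_le hfi.1 hγ₀ zero_le_one hγ₁ (by simpa using hfi.norm)).congr
    (hf.mono fun x hx => ?_)
  simp [abs_of_nonneg hx]

theorem integral_rpow_le_rpow_integral [IsProbabilityMeasure μ] (hfi : Integrable f μ)
    (hf : 0 ≤ᵐ[μ] f) (hγ₀ : 0 ≤ γ) (hγ₁ : γ ≤ 1) :
    ∫ x, f x ^ γ ∂μ ≤ (∫ x, f x ∂μ) ^ γ :=
  (concaveOn_rpow hγ₀ hγ₁).le_map_integral (continuous_rpow_const hγ₀).continuousOn isClosed_Ici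
    hf hfi (hfi.rpow_of_le_one hf hγ₀ hγ₁)

end Integrals

theorem integral_abs_rpow_sub_rpow_rpow_le {γ p : ℝ} (hγ₀ : 0 ≤ γ) (hγ₁ : γ ≤ 1) (hp : 0 ≤ p)
    {P : Measure (ℝ × ℝ)} [IsProbabilityMeasure P] (hnonneg : ∀ᵐ z ∂P, 0 ≤ z.1 ∧ 0 ≤ z.2)
    (hint : Integrable (fun z => |z.1 - z.2| ^ p) P) :
    ∫ z, |z.1 ^ γ - z.2 ^ γ| ^ p ∂P ≤ (∫ z, |z.1 - z.2| ^ p ∂P) ^ γ := by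
  have hcost : 0 ≤ᵐ[P] fun z => |z.1 - z.2| ^ p := ae_of_all _ fun z => by positivity
  have hholder : ∀ᵐ z ∂P, |z.1 ^ γ - z.2 ^ γ| ^ p ≤ (|z.1 - z.2| ^ p) ^ γ := by
    filter_upwards [hnonneg] with z ⟨h₁, h₂⟩
    rw [← rpow_mul (abs_nonneg _), mul_comm, rpow_mul (abs_nonneg _)]
    exact rpow_le_rpow (abs_nonneg _) (abs_rpow_sub_rpow_le h₁ h₂ hγ₀ hγ₁) hp
  calc ∫ z, |z.1 ^ γ - z.2 ^ γ| ^ p ∂P ≤ ∫ z, (|z.1 - z.2| ^ p) ^ γ ∂P :=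
        integral_mono_of_nonneg (ae_of_all _ fun z => by positivity)
          (hint.rpow_of_le_one hcost hγ₀ hγ₁) hholder
    _ ≤ (∫ z, |z.1 - z.2| ^ p ∂P) ^ γ := integral_rpow_le_rpow_integral hint hcost hγ₀ hγ₁

theorem integrable_abs_sub_rpow_of_map_fst_of_map_snd {p : ℝ} (hp : 0 < p) {μ ν : Measure ℝ}
    {P : Measure (ℝ × ℝ)} (h₁ : P.map Prod.fst = μ) (h₂ : P.map Prod.snd = ν)
    (hμ : Integrable (fun x => |x| ^ p) μ) (hν : Integrable (fun x => |x| ^ p) ν) :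
    Integrable (fun z : ℝ × ℝ => |z.1 - z.2| ^ p) P := by
  have memLp_of_map {g : ℝ × ℝ → ℝ} (hg : Measurable g)
      (h : Integrable (fun x => |x| ^ p) (P.map g)) : MemLp g (ENNReal.ofReal p) P := by
    have h' := (integrable_abs_rpow_iff_memLp (f := id) hp aestronglyMeasurable_id).1 h
    exact (memLp_map_measure_iff aestronglyMeasurable_id hg.aemeasurable).1 h'
  rw [integrable_abs_rpow_iff_memLp hp (by fun_prop)]
  exact (memLp_of_map measurable_fst (h₁ ▸ hμ)).sub (memLp_of_map measurable_snd (h₂ ▸ hν))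

section Wasserstein

variable {p : ℝ} {μ ν : Measure ℝ}

def transportCosts (p : ℝ) (μ ν : Measure ℝ) : Set ℝ :=
  {c : ℝ | ∃ P : Measure (ℝ × ℝ), IsProbabilityMeasure P ∧
    P.map Prod.fst = μ ∧ P.map Prod.snd = ν ∧
    c = (∫ z, |z.1 - z.2| ^ p ∂P) ^ (1 / p)}

theorem Wp_eq_sInf_transportCosts : Wp p μ ν = sInf (transportCosts p μ ν) := rfl

theorem transportCosts_subset_Ici : transportCosts p μ ν ⊆ Set.Ici 0 := by
  rintro _ ⟨P, -, -, -, rfl⟩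
  exact rpow_nonneg (integral_nonneg fun z => by positivity) _

theorem transportCosts_nonempty [IsProbabilityMeasure μ] [IsProbabilityMeasure ν] :
    (transportCosts p μ ν).Nonempty :=
  ⟨_, μ.prod ν, inferInstance, by simp, by simp, rfl⟩

theorem Wp_le_of_coupling {P : Measure (ℝ × ℝ)} [IsProbabilityMeasure P]
    (h₁ : P.map Prod.fst = μ) (h₂ : P.map Prod.snd = ν) :
    Wp p μ ν ≤ (∫ z, |z.1 - z.2| ^ p ∂P) ^ (1 / p) :=
  csInf_le ⟨0, transportCosts_subset_Ici⟩ ⟨P, inferInstance, h₁, h₂, rfl⟩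

theorem Wp_map_le_of_coupling {s : ℝ → ℝ} (hs : Measurable s) {P : Measure (ℝ × ℝ)}
    [IsProbabilityMeasure P] (h₁ : P.map Prod.fst = μ) (h₂ : P.map Prod.snd = ν) :
    Wp p (μ.map s) (ν.map s) ≤ (∫ z, |s z.1 - s z.2| ^ p ∂P) ^ (1 / p) := by
  have hss : Measurable (Prod.map s s) := hs.prodMap hs
  have := Measure.isProbabilityMeasure_map (μ := P) hss.aemeasurable
  have hQ := Wp_le_of_coupling (p := p) (μ := μ.map s) (ν := ν.map s)
    (P := P.map (Prod.map s s))
    (by rw [Measure.map_map measurable_fst hss, ← h₁, Measure.map_map hs measurable_fst]; rfl)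
    (by rw [Measure.map_map measurable_snd hss, ← h₂, Measure.map_map hs measurable_snd]; rfl)
  have hcost : Measurable fun z : ℝ × ℝ => |z.1 - z.2| ^ p := by fun_prop
  rwa [integral_map hss.aemeasurable hcost.aestronglyMeasurable] at hQ

theorem le_Wp_rpow_of_forall_coupling {γ w : ℝ} (hγ : 0 ≤ γ) [IsProbabilityMeasure μ]
    [IsProbabilityMeasure ν]
    (h : ∀ P : Measure (ℝ × ℝ), IsProbabilityMeasure P → P.map Prod.fst = μ →
      P.map Prod.snd = ν → w ≤ ((∫ z, |z.1 - z.2| ^ p ∂P) ^ (1 / p)) ^ γ) :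
    w ≤ Wp p μ ν ^ γ := by
  rw [Wp_eq_sInf_transportCosts, MonotoneOn.map_csInf_of_continuousWithinAt
    (continuousAt_rpow_const _ _ (Or.inr hγ)).continuousWithinAt
    ((monotoneOn_rpow_Ici_of_exponent_nonneg hγ).mono transportCosts_subset_Ici)
    transportCosts_nonempty ⟨0, transportCosts_subset_Ici⟩]
  refine le_csInf (transportCosts_nonempty.image _) ?_
  rintro _ ⟨_, ⟨P, hP, h₁, h₂, rfl⟩, rfl⟩
  exact h P hP h₁ h₂

end Wasserstein

theorem stmt13 (γ p : ℝ) (hγ : γ ∈ Set.Ioc (0 : ℝ) 1) (hp : 1 ≤ p)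
    (F₁ F₂ : Measure ℝ) [IsProbabilityMeasure F₁] [IsProbabilityMeasure F₂]
    (hsupp₁ : F₁ (Set.Iio 0) = 0) (hsupp₂ : F₂ (Set.Iio 0) = 0)
    (hmom₁ : Integrable (fun x => |x| ^ p) F₁) (hmom₂ : Integrable (fun x => |x| ^ p) F₂) :
    Wp p (F₁.map fun x => x ^ γ) (F₂.map fun x => x ^ γ) ≤ Wp p F₁ F₂ ^ γ := by
  obtain ⟨hγ₀, hγ₁⟩ := hγ
  have hp₀ : 0 < p := by linarith
  have hnonneg {F : Measure ℝ} (hF : F (Set.Iio 0) = 0) : ∀ᵐ x ∂F, 0 ≤ x := by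
    simpa [ae_iff, Set.Iio] using hF
  refine le_Wp_rpow_of_forall_coupling hγ₀.le fun P hP h₁ h₂ => ?_
  have hP_nonneg : ∀ᵐ z ∂P, 0 ≤ z.1 ∧ 0 ≤ z.2 :=
    (ae_of_ae_map measurable_fst.aemeasurable (h₁ ▸ hnonneg hsupp₁)).and
      (ae_of_ae_map measurable_snd.aemeasurable (h₂ ▸ hnonneg hsupp₂))
  have hcost := integral_abs_rpow_sub_rpow_rpow_le hγ₀.le hγ₁ hp₀.le hP_nonneg
    (integrable_abs_sub_rpow_of_map_fst_of_map_snd hp₀ h₁ h₂ hmom₁ hmom₂)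
  calc Wp p (F₁.map fun x => x ^ γ) (F₂.map fun x => x ^ γ)
      ≤ (∫ z, |z.1 ^ γ - z.2 ^ γ| ^ p ∂P) ^ (1 / p) :=
        Wp_map_le_of_coupling (by fun_prop) h₁ h₂
    _ ≤ ((∫ z, |z.1 - z.2| ^ p ∂P) ^ γ) ^ (1 / p) :=
        rpow_le_rpow (integral_nonneg fun z => by positivity) hcost (by positivity)
    _ = ((∫ z, |z.1 - z.2| ^ p ∂P) ^ (1 / p)) ^ γ := by
        have hI : 0 ≤ ∫ z, |z.1 - z.2| ^ p ∂P := integral_nonneg fun z => by positivity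
        rw [← rpow_mul hI, mul_comm, rpow_mul hI]
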